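/- Let m≥n≥1. Then there exists some i with 0<i<2^{n+1} such that E_{n,m}^i∈Ω2^ℕ if and only if m=n. -/
import Mathlib


open scoped Pointwise ENNReal
open Filter

noncomputable section

/-- The digit set Ω₁ = {(0,0),(0,1),(1,0)} ⊆ ℝ². -/
def Omega1 : Set (ℝ × ℝ) := {((0:ℝ), (0:ℝ)), (0, 1), (1, 0)}

/-- The digit set Ω₂ = Ω₁ − Ω₁ ⊆ ℝ². -/
def Omega2 : Set (ℝ × ℝ) :=
  {((0:ℝ), (0:ℝ)), (0, 1), (1, 0), (-1, 0), (-1, 1), (0, -1), (1, -1)}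

/-- The Sierpinski gasket in base `q`. -/
def gasket (q : ℝ) : Set (ℝ × ℝ) :=
  {x | ∃ c : ℕ → ℝ × ℝ, (∀ i, c i ∈ Omega1) ∧ x = ∑' i, (q ^ (i + 1))⁻¹ • c i}

/-- `U_q`: points of `[-1/(q-1), 1/(q-1)]` having a unique `q`-expansion over `{-1,0,1}`. -/
def uniqSet (q : ℝ) : Set ℝ :=
  {s | s ∈ Set.Icc (-(1 / (q - 1))) (1 / (q - 1)) ∧
    ∃! t : ℕ → ℝ, (∀ i, t i ∈ ({-1, 0, 1} : Set ℝ)) ∧ s = ∑' i, t i / q ^ (i + 1)}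

/-- The set `T`. -/
def Tset (q : ℝ) : Set (ℝ × ℝ) :=
  {t | t ∈ gasket q - gasket q ∧ t.1 ∈ uniqSet q ∧ t.2 ∈ uniqSet q}

/-- The set `D_q` of Hausdorff dimensions of intersections. -/
def Dset (q : ℝ) : Set ℝ≥0∞ :=
  {d | ∃ t ∈ Tset q, d = dimH (gasket q ∩ ((· + t) '' gasket q))}

/-- The words `w_n` over `{0,1,2}`: `klWord 0 = w₁ = 2`,
`w_{n+1} = (w_n ⟨reflection of w_n⟩)⁺`. -/
def klWord : ℕ → List ℕ
  | 0 => [2]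
  | n + 1 =>
    let w := klWord n ++ (klWord n).map (fun x => 2 - x)
    w.dropLast ++ [w.getLast?.getD 0 + 1]

/-- `isKLBase n p`: `p ∈ (2,3)` and `1` has (greedy) expansion `w_n 0^∞` in base `p`
w.r.t. `{0,1,2}`, i.e. `p = q_n`. -/
def isKLBase (n : ℕ) (p : ℝ) : Prop :=
  p ∈ Set.Ioo (2 : ℝ) 3 ∧
    (1 : ℝ) = ∑ i ∈ Finset.range (klWord (n - 1)).length,
      ((klWord (n - 1)).getD i 0 : ℝ) / p ^ (i + 1)

/-- `1` has a unique expansion in base `p` w.r.t. the digit set `{0,1,2}`. -/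
def uniqueOneExp (p : ℝ) : Prop :=
  ∃! c : ℕ → ℕ, (∀ i, c i ≤ 2) ∧ (1 : ℝ) = ∑' i, (c i : ℝ) / p ^ (i + 1)

/-- The Thue–Morse sequence. -/
def tm : ℕ → ℕ
  | 0 => 0
  | n + 1 => if (n + 1) % 2 = 0 then tm ((n + 1) / 2) else 1 - tm ((n + 1) / 2)
decreasing_by all_goals omega

/-- `λ_i = τ_i − τ_{i−1}` (for `i ≥ 1`). -/
def lam (i : ℕ) : ℤ := (tm i : ℤ) - (tm (i - 1) : ℤ)

/-- The word `ε_n = λ₁ ⋯ λ_{2^n}`. -/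
def eps (n : ℕ) : List ℤ := (List.range (2 ^ n)).map fun i => lam (i + 1)

/-- Reflection of a word over `{-1,0,1}`: each digit `x` is replaced by `-x`. -/
def reflect (w : List ℤ) : List ℤ := w.map fun x => -x

/-- `w⁺`: the last digit is increased by `1`. -/
def plusOne (w : List ℤ) : List ℤ := w.dropLast ++ [w.getLast?.getD 0 + 1]

/-- `w⁻`: the last digit is decreased by `1`. -/
def minusOne (w : List ℤ) : List ℤ := w.dropLast ++ [w.getLast?.getD 0 - 1]

/-- The periodic sequence `w^∞` (the `(j+1)`-st term is `per w j`). -/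
def per (w : List ℤ) : ℕ → ℤ := fun j => w.getD (j % w.length) 0

/-- `EndsWith x s`: the sequence `x` ends with (has tail) the sequence `s`. -/
def EndsWith {α : Type*} (x s : ℕ → α) : Prop := ∃ k, ∀ j, x (j + k) = s j

/-- The digit set Ω₂ as a subset of ℤ × ℤ. -/
def Omega2Z : Set (ℤ × ℤ) :=
  {((0:ℤ), (0:ℤ)), (0, 1), (1, 0), (-1, 0), (-1, 1), (0, -1), (1, -1)}

/-- `E_{n,m}^i = (σ^i((ε_n ε̄_n)^∞), (ε_m ε̄_m)^∞)` (the `(j+1)`-st term is `Eseq n m i j`). -/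
def Eseq (n m i : ℕ) : ℕ → ℤ × ℤ := fun j =>
  (per (eps n ++ reflect (eps n)) (j + i), per (eps m ++ reflect (eps m)) j)


/-- `A_k = a₁ ⋯ a_{2^k}` where `a_i = λ_{2i−1}`. -/
def Aword (k : ℕ) : List ℤ := (List.range (2 ^ k)).map fun i => lam (2 * i + 1)

/-- `D_{k,k}^i = (σ^i((A_k Ā_k)^∞), (A_k Ā_k)^∞)`. -/
def Dseq (k i : ℕ) : ℕ → ℤ × ℤ := fun j =>
  (per (Aword k ++ reflect (Aword k)) (j + i), per (Aword k ++ reflect (Aword k)) j)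

/-- `U_q'`: the set of sequences over `{-1,0,1}` which are the unique `q`-expansion
of the number they represent. -/
def uniqSeqSet (q : ℝ) : Set (ℕ → ℤ) :=
  {t | (∀ i, t i ∈ ({-1, 0, 1} : Set ℤ)) ∧
    ∀ s : ℕ → ℤ, (∀ i, s i ∈ ({-1, 0, 1} : Set ℤ)) →
      (∑' i, (s i : ℝ) / q ^ (i + 1)) = (∑' i, (t i : ℝ) / q ^ (i + 1)) → s = t}

/-- `ε_{n-1} ε̄_{n-1}`, with the convention `ε_{-1} ε̄_{-1} := 00`. -/
def epsPair : ℕ → List ℤ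
  | 0 => [0, 0]
  | n + 1 => eps n ++ reflect (eps n)

/-- The finite prefix
`(ε_0 ε̄_0)^{j_0} (ε_0 ε̄_1)^{l_0} ⋯ (ε_{M-1} ε̄_{M-1})^{j_{M-1}} (ε_{M-1} ε̄_M)^{l_{M-1}}`. -/
def blockJL (j l : ℕ → ℕ) : ℕ → List ℤ
  | 0 => []
  | M + 1 => blockJL j l M
      ++ (List.replicate (j M) (eps M ++ reflect (eps M))).flatten
      ++ (List.replicate (l M) (eps M ++ reflect (eps (M + 1)))).flatten

/-- The tail of `t` starting at some position `k` follows the pattern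
`(ε_0 ε̄_0)^{j_0}(ε_0 ε̄_1)^{l_0}(ε_1 ε̄_1)^{j_1}(ε_1 ε̄_2)^{l_1}⋯`. -/
def TailFollows (t : ℕ → ℤ) (j l : ℕ → ℕ) : Prop :=
  ∃ k, ∀ M, ∀ i < (blockJL j l M).length, t (i + k) = (blockJL j l M).getD i 0

/-- As `TailFollows`, but for the reflection of the pattern. -/
def TailFollowsRefl (t : ℕ → ℤ) (j l : ℕ → ℕ) : Prop :=
  ∃ k, ∀ M, ∀ i < (blockJL j l M).length, t (i + k) = -(blockJL j l M).getD i 0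

/-- `a_n = 0 λ₁ ⋯ λ_{2^n−1}`. -/
def aword (n : ℕ) : List ℤ := 0 :: ((List.range (2 ^ n - 1)).map fun i => lam (i + 1))

/-- `b_n = (−1) λ₁ ⋯ λ_{2^n−1}`. -/
def bword (n : ℕ) : List ℤ := (-1) :: ((List.range (2 ^ n - 1)).map fun i => lam (i + 1))

/-- The transitions allowed by the matrix `A` on the alphabet `{a_n, b_n, ā_n, b̄_n}`:
`a→b, a→ā, b→ā, ā→a, ā→b̄, b̄→a`. -/
def allowedTrans (n : ℕ) (u v : List ℤ) : Prop :=
  (u = aword n ∧ (v = bword n ∨ v = reflect (aword n))) ∨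
  (u = bword n ∧ v = reflect (aword n)) ∨
  (u = reflect (aword n) ∧ (v = aword n ∨ v = reflect (bword n))) ∨
  (u = reflect (bword n) ∧ v = aword n)


lemma tm_le_one : ∀ r, tm r ≤ 1 := by
  intro r
  induction r using Nat.strong_induction_on with
  | _ r ih =>
    match r with
    | 0 => simp [tm]
    | n+1 =>
      rw [tm]
      split
      · exact ih _ (by omega)
      · omega

lemma tm_two_mul (r : ℕ) : tm (2*r) = tm r := by
  cases r with
  | zero => rfl
  | succ k =>
    have h : 2 * (k+1) = (2*k+1)+1 := by ring
    rw [h, tm]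
    have h1 : (2*k+1+1) % 2 = 0 := by omega
    have h2 : (2*k+1+1) / 2 = k+1 := by omega
    simp [h1, h2]

lemma tm_odd (r : ℕ) : tm (2*r+1) = 1 - tm r := by
  rw [tm]
  have h1 : (2*r+1) % 2 = 1 := by omega
  have h2 : (2*r+1)/2 = r := by omega
  simp [h1, h2]

lemma lam_odd (r : ℕ) : lam (2*r+1) = 1 - 2 * tm r := by
  have h1 := tm_le_one r
  unfold lam
  have : 2*r+1-1 = 2*r := by omega
  rw [this, tm_two_mul, tm_odd]
  omega

lemma lam_odd_ne (r : ℕ) : lam (2*r+1) ≠ 0 := by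
  have h1 := tm_le_one r
  rw [lam_odd]
  omega

lemma lam_mem (i : ℕ) : -1 ≤ lam i ∧ lam i ≤ 1 := by
  have h1 := tm_le_one i
  have h2 := tm_le_one (i-1)
  unfold lam
  omega

lemma eps_length (n : ℕ) : (eps n).length = 2^n := by simp [eps]

lemma eps_getD (n k : ℕ) (h : k < 2^n) : (eps n).getD k 0 = lam (k+1) := by
  rw [List.getD_eq_getElem _ _ (by simp [eps_length, h])]
  simp [eps]

lemma reflect_length (w : List ℤ) : (reflect w).length = w.length := by simp [reflect]

lemma reflect_getD (w : List ℤ) (k : ℕ) : (reflect w).getD k 0 = -(w.getD k 0) := by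
  simp only [reflect, List.getD, List.getElem?_map]
  cases h : w[k]? <;> simp [h]

/-- the word `ε_n ε̄_n` -/
def wrd (n : ℕ) : List ℤ := eps n ++ reflect (eps n)

lemma wrd_length (n : ℕ) : (wrd n).length = 2^(n+1) := by
  simp [wrd, eps_length, reflect_length]; ring

lemma per_wrd (n j : ℕ) : per (wrd n) j =
    if j % 2^(n+1) < 2^n then lam (j % 2^(n+1) + 1)
    else - lam (j % 2^(n+1) - 2^n + 1) := by
  unfold per
  rw [wrd_length]
  set r := j % 2^(n+1) with hr
  have hrlt : r < 2^(n+1) := Nat.mod_lt _ (by positivity)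
  by_cases h : r < 2^n
  · rw [if_pos h, wrd, List.getD_append _ _ _ _ (by rw [eps_length]; exact h), eps_getD _ _ h]
  · rw [if_neg h]
    push_neg at h
    rw [wrd, List.getD_append_right _ _ _ _ (by rw [eps_length]; exact h)]
    rw [eps_length, reflect_getD, eps_getD]
    have : 2^(n+1) = 2^n + 2^n := by rw [pow_succ]; ring
    omega

lemma mod_add_half (n j : ℕ) : (j + 2^n) % 2^(n+1) =
    if j % 2^(n+1) < 2^n then j % 2^(n+1) + 2^n else j % 2^(n+1) - 2^n := by
  have hL : 2^(n+1) = 2^n + 2^n := by rw [pow_succ]; ring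
  have hpos : 0 < 2^(n+1) := by positivity
  rw [Nat.add_mod]
  have h2 : 2^n % 2^(n+1) = 2^n := Nat.mod_eq_of_lt (by omega)
  rw [h2]
  set r := j % 2^(n+1) with hr
  have hrlt : r < 2^(n+1) := Nat.mod_lt _ hpos
  by_cases h : r < 2^n
  · rw [if_pos h, Nat.mod_eq_of_lt (by omega)]
  · rw [if_neg h]
    push_neg at h
    rw [Nat.mod_eq_sub_mod (by omega), Nat.mod_eq_of_lt (by omega)]
    omega

/-- antiperiodicity -/
lemma per_wrd_flip (n j : ℕ) : per (wrd n) (j + 2^n) = - per (wrd n) j := by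
  rw [per_wrd, per_wrd, mod_add_half]
  have hL : 2^(n+1) = 2^n + 2^n := by rw [pow_succ]; ring
  have hrlt : j % 2^(n+1) < 2^(n+1) := Nat.mod_lt _ (by positivity)
  by_cases h : j % 2^(n+1) < 2^n
  · rw [if_pos h, if_pos h, if_neg (by omega)]
    have e : j % 2^(n+1) + 2^n - 2^n + 1 = j % 2^(n+1) + 1 := by omega
    rw [e]
  · rw [if_neg h, if_neg h, if_pos (by omega)]
    simp

/-- periodicity -/
lemma per_wrd_period (n c j : ℕ) (h : 2^(n+1) ∣ c) : per (wrd n) (j + c) = per (wrd n) j := by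
  obtain ⟨t, rfl⟩ := h
  unfold per
  rw [wrd_length, Nat.add_mul_mod_self_left]

lemma per_wrd_ne_zero (n k : ℕ) (hn : 1 ≤ n) (hk : k % 2 = 0) : per (wrd n) k ≠ 0 := by
  rw [per_wrd]
  have hr2 : k % 2^(n+1) % 2 = 0 := by
    rw [Nat.mod_mod_of_dvd k (dvd_pow_self 2 (by omega))]; exact hk
  have hn2 : 2^n % 2 = 0 := by
    rcases Nat.exists_eq_add_of_le hn with ⟨d, rfl⟩
    rw [pow_add]; simp [Nat.mul_mod]
  by_cases h : k % 2^(n+1) < 2^n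
  · rw [if_pos h]
    have : k % 2^(n+1) + 1 = 2 * (k % 2^(n+1) / 2) + 1 := by omega
    rw [this]; exact lam_odd_ne _
  · rw [if_neg h]
    push_neg at h
    have : k % 2^(n+1) - 2^n + 1 = 2 * ((k % 2^(n+1) - 2^n) / 2) + 1 := by omega
    rw [this]
    simp; exact lam_odd_ne ((k % 2^(n+1) - 2^n) / 2)

lemma per_wrd_bound (n j : ℕ) : -1 ≤ per (wrd n) j ∧ per (wrd n) j ≤ 1 := by
  rw [per_wrd]
  by_cases h : j % 2^(n+1) < 2^n
  · rw [if_pos h]; exact lam_mem _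
  · rw [if_neg h]
    have := lam_mem (j % 2^(n+1) - 2^n + 1)
    omega

lemma tm1 : tm 1 = 1 := by have := tm_odd 0; simpa [tm] using this
lemma lam1 : lam 1 = 1 := by unfold lam; rw [tm1]; simp [tm]
lemma lam4 : lam 4 = 1 := by
  have h4 : tm 4 = 1 := by
    have a := tm_two_mul 2; have b := tm_two_mul 1
    norm_num at a b; rw [tm1] at b; omega
  have h3 : tm 3 = 0 := by have := tm_odd 1; norm_num at this; rw [tm1] at this; omega
  unfold lam; rw [show (4:ℕ)-1 = 3 from rfl, h4, h3]; simp

lemma per_wrd_zero (m : ℕ) : per (wrd m) 0 = 1 := by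
  rw [per_wrd]
  have : (0:ℕ) % 2^(m+1) = 0 := Nat.zero_mod _
  rw [this, if_pos (by positivity)]
  exact lam1

lemma per_wrd_three (m : ℕ) (hm : 2 ≤ m) : per (wrd m) 3 = 1 := by
  rw [per_wrd]
  have h4 : 4 ≤ 2^m := by calc (4:ℕ) = 2^2 := rfl
                               _ ≤ 2^m := Nat.pow_le_pow_right (by norm_num) hm
  have h8 : 2^(m+1) = 2^m + 2^m := by rw [pow_succ]; ring
  have h3 : 3 % 2^(m+1) = 3 := Nat.mod_eq_of_lt (by omega)
  rw [h3, if_pos (by omega)]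
  exact lam4

lemma Eseq_eq (n m i j : ℕ) : Eseq n m i j = (per (wrd n) (j + i), per (wrd m) j) := rfl

theorem stmt12 (n m : ℕ) (hn : 1 ≤ n) (hnm : n ≤ m) :
    (∃ i, 0 < i ∧ i < 2 ^ (n + 1) ∧ ∀ j, Eseq n m i j ∈ Omega2Z) ↔ m = n := by
  constructor
  · rintro ⟨i, hi0, hi2, hΩ⟩
    by_contra hne
    have hm : n + 1 ≤ m := by omega
    have key : ∀ j, per (wrd n) (j + i) ≠ 0 → per (wrd m) j = 0 := by
      intro j hx
      have h1 := hΩ j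
      have h2 := hΩ (j + 2^m)
      rw [Eseq_eq] at h1 h2
      rw [show j + 2^m + i = (j + i) + 2^m by ring] at h2
      rw [per_wrd_period n (2^m) (j+i) (pow_dvd_pow 2 hm)] at h2
      rw [show (2:ℕ)^m = 2^m + 0 from rfl, ← Nat.add_assoc,
        show j + 2^m + 0 = j + 2^m from rfl] at h2
      rw [per_wrd_flip m j] at h2
      simp only [Omega2Z, Set.mem_insert_iff, Set.mem_singleton_iff, Prod.ext_iff] at h1 h2
      omega
    rcases Nat.even_or_odd i with he | ho
    · have hx : per (wrd n) (0 + i) ≠ 0 :=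
        per_wrd_ne_zero n (0 + i) hn (by have := Nat.even_iff.mp he; omega)
      have h0 := key 0 hx
      rw [per_wrd_zero] at h0
      exact one_ne_zero h0
    · have hx : per (wrd n) (3 + i) ≠ 0 :=
        per_wrd_ne_zero n (3 + i) hn (by have := Nat.odd_iff.mp ho; omega)
      have h3 := key 3 hx
      rw [per_wrd_three m (by omega)] at h3
      exact one_ne_zero h3
  · intro h
    subst h
    refine ⟨2^m, by positivity, ?_, fun j => ?_⟩
    · rw [pow_succ]
      have : 0 < 2^m := by positivity
      omega
    · rw [Eseq_eq, per_wrd_flip]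
      have := per_wrd_bound m j
      simp only [Omega2Z, Set.mem_insert_iff, Set.mem_singleton_iff, Prod.ext_iff]
      omega

end
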